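/- Let X and Y be n×n real symmetric positive definite matrices. Then for all s, t ∈ [0,1], X *_s (X *_t Y) = X *_{st} Y. -/

import Mathlib

open Matrix Filter Topology
open scoped Classical

noncomputable section

/-- Square real matrices. -/
abbrev Mat (n : ℕ) := Matrix (Fin n) (Fin n) ℝ

/-- The largest element of the real spectrum of a matrix. -/
noncomputable def lamMax {n : ℕ} (A : Mat n) : ℝ := sSup (spectrum ℝ A)

/-- The smallest element of the real spectrum of a matrix. -/
noncomputable def lamMin {n : ℕ} (A : Mat n) : ℝ := sInf (spectrum ℝ A)

/-- The positive semidefinite square root (junk value `0` if not PSD). -/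
noncomputable def sqrtM {n : ℕ} (X : Mat n) : Mat n :=
  if h : X.PosSemidef then
    (h.1.eigenvectorUnitary : Mat n) * diagonal ((RCLike.ofReal : ℝ → ℝ) ∘ Real.sqrt ∘ h.1.eigenvalues) *
      (star (h.1.eigenvectorUnitary : Mat n))
  else 0

/-- `X^{-1/2}` for a positive definite matrix. -/
noncomputable def invSqrt {n : ℕ} (X : Mat n) : Mat n := (sqrtM X)⁻¹

/-- `λ_max(X^{-1/2} Y X^{-1/2})`, the largest generalized eigenvalue of the pair `(Y, X)`. -/
noncomputable def gmax {n : ℕ} (X Y : Mat n) : ℝ := lamMax (invSqrt X * Y * invSqrt X)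

/-- `λ_min(X^{-1/2} Y X^{-1/2})`, the smallest generalized eigenvalue of the pair `(Y, X)`. -/
noncomputable def gmin {n : ℕ} (X Y : Mat n) : ℝ := lamMin (invSqrt X * Y * invSqrt X)

/-- The Thompson geodesic `X *_t Y`. -/
noncomputable def thompson {n : ℕ} (X Y : Mat n) (t : ℝ) : Mat n :=
  if gmin X Y = gmax X Y then (gmin X Y) ^ t • X
  else ((gmax X Y ^ t - gmin X Y ^ t) / (gmax X Y - gmin X Y)) • Y +
    ((gmax X Y * gmin X Y ^ t - gmin X Y * gmax X Y ^ t) / (gmax X Y - gmin X Y)) • X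

/-- The Thompson part metric on positive definite matrices. -/
noncomputable def dT {n : ℕ} (X Y : Mat n) : ℝ :=
  max (Real.log (gmax X Y)) (Real.log (gmax Y X))

/-- Hilbert's projective metric on positive definite matrices. -/
noncomputable def dH {n : ℕ} (X Y : Mat n) : ℝ :=
  Real.log (gmax X Y / gmin X Y)

/-- The coefficient `m(X,Y) = dφ/dt(0)` of the Thompson geodesic. -/
noncomputable def mCoef {n : ℕ} (X Y : Mat n) : ℝ :=
  if gmax X Y = gmin X Y then 1 / gmin X Y
  else (Real.log (gmax X Y) - Real.log (gmin X Y)) / (gmax X Y - gmin X Y)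

/-- The coefficient `o(X,Y) = dψ/dt(0)` of the Thompson geodesic. -/
noncomputable def oCoef {n : ℕ} (X Y : Mat n) : ℝ :=
  if gmax X Y = gmin X Y then Real.log (gmin X Y) - 1
  else (gmax X Y * Real.log (gmin X Y) - gmin X Y * Real.log (gmax X Y)) /
    (gmax X Y - gmin X Y)

/-- The mean equation `∑ⱼ m(X*,Yⱼ)·Yⱼ + (∑ⱼ o(X*,Yⱼ))·X* = 0`. -/
def MeanEq {n k : ℕ} (Y : Fin k → Mat n) (Xs : Mat n) : Prop :=
  ∑ j, mCoef Xs (Y j) • Y j + (∑ j, oCoef Xs (Y j)) • Xs = 0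

/-- The Frobenius norm of a matrix. -/
noncomputable def frob {n : ℕ} (A : Mat n) : ℝ :=
  Real.sqrt (∑ i, ∑ j, (A i j) ^ 2)

/-- The inductive sequence of Algorithm 4.1: `indSeq hk Y X₁ i = X_{i+1}`, so that
`indSeq hk Y X₁ 0 = X₁` and `X_{i+1} = X_i *_{1/(i+1)} Y_j` with `j ≡ i (mod k)`,
`1 ≤ j ≤ k`. -/
noncomputable def indSeq {n k : ℕ} (hk : 0 < k) (Y : Fin k → Mat n) (X₁ : Mat n) :
    ℕ → Mat n
  | 0 => X₁
  | (i + 1) => thompson (indSeq hk Y X₁ i) (Y ⟨i % k, Nat.mod_lt i hk⟩)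
      (1 / ((i : ℝ) + 2))

/-- The map `T_p(X) = (⋯((X *_{1/(pk+2)} Y₁) *_{1/(pk+3)} Y₂)⋯) *_{1/((p+1)k+1)} Y_k`. -/
noncomputable def Tmap {n k : ℕ} (Y : Fin k → Mat n) (p : ℕ) (X : Mat n) : Mat n :=
  (List.finRange k).foldl
    (fun Z j => thompson Z (Y j) (1 / ((p : ℝ) * (k : ℝ) + ((j : ℕ) : ℝ) + 2))) X

/-- The spectral `t`-th power of a symmetric matrix (junk value `0` otherwise). -/
noncomputable def spdPow {n : ℕ} (A : Mat n) (t : ℝ) : Mat n :=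
  if h : A.IsHermitian then
    (h.eigenvectorUnitary : Mat n) * Matrix.diagonal (fun i => h.eigenvalues i ^ t) *
      (star (h.eigenvectorUnitary : Mat n))
  else 0

/-- The affine-invariant Riemannian geodesic `X #_t Y = X^{1/2} (X^{-1/2} Y X^{-1/2})^t X^{1/2}`. -/
noncomputable def riemann {n : ℕ} (X Y : Mat n) (t : ℝ) : Mat n :=
  sqrtM X * spdPow (invSqrt X * Y * invSqrt X) t * sqrtM X

/-!
After congruence by `X^{-1/2}`, `X` becomes `1` and `Y` a matrix with extreme eigenvalues
`α ≤ β`. If `α < β`, then `X *_t Y = a • Y + b • X`, where `x ↦ a x + b` is the chord of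
`x ↦ x ^ t` through `(α, α ^ t)` and `(β, β ^ t)`. Since `a > 0`, the extreme generalized
eigenvalues of `(X *_t Y, X)` are `α ^ t` and `β ^ t`, so `X *_s (X *_t Y)` corresponds to the
chord of `x ↦ x ^ s` at `α ^ t, β ^ t` composed with the chord of `x ↦ x ^ t` at `α, β`.
This composite is affine and agrees with `x ↦ x ^ (s t)` at `α` and `β`, hence is its chord. In
the degenerate cases `α = β` and `t = 0` everything is a multiple of `X`.
-/

namespace Thompson

section Chord

variable {u v a b c d : ℝ}

def chordSlope (u v a b : ℝ) : ℝ := (b - a) / (v - u)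

def chordIntercept (u v a b : ℝ) : ℝ := (v * a - u * b) / (v - u)

lemma chordSlope_mul_add_chordIntercept_left (huv : u ≠ v) :
    chordSlope u v a b * u + chordIntercept u v a b = a := by
  have : v - u ≠ 0 := sub_ne_zero.2 huv.symm
  unfold chordSlope chordIntercept
  field_simp
  ring

lemma chordSlope_mul_add_chordIntercept_right (huv : u ≠ v) :
    chordSlope u v a b * v + chordIntercept u v a b = b := by
  have : v - u ≠ 0 := sub_ne_zero.2 huv.symm
  unfold chordSlope chordIntercept
  field_simp
  ring

lemma chordSlope_mul_chordSlope (hab : a ≠ b) :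
    chordSlope a b c d * chordSlope u v a b = chordSlope u v c d :=
  div_mul_div_cancel₀ (sub_ne_zero.2 hab.symm)

lemma chordSlope_mul_chordIntercept_add_chordIntercept (huv : u ≠ v) (hab : a ≠ b) :
    chordSlope a b c d * chordIntercept u v a b + chordIntercept a b c d =
      chordIntercept u v c d := by
  have : v - u ≠ 0 := sub_ne_zero.2 huv.symm
  have : b - a ≠ 0 := sub_ne_zero.2 hab.symm
  unfold chordSlope chordIntercept
  field_simp
  ring

end Chord

section Spectrum

variable {A : Type*} [Ring A] [Algebra ℝ A]

lemma spectrum_smul_add_algebraMap (x : A) {c : ℝ} (hc : c ≠ 0) (d : ℝ) :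
    spectrum ℝ (c • x + algebraMap ℝ A d) = (fun r => c * r + d) '' spectrum ℝ x := by
  rw [← spectrum.add_singleton_eq, show c • x = (Units.mk0 c hc : ℝˣ) • x from rfl,
    spectrum.unit_smul_eq_smul, Set.add_singleton, ← Set.image_smul, Set.image_image]
  rfl

end Spectrum

variable {n : ℕ}

lemma lamMax_smul_add_smul_one {M : Mat n} (hM : (spectrum ℝ M).Nonempty) {c : ℝ} (hc : 0 < c)
    (d : ℝ) : lamMax (c • M + d • 1) = c * lamMax M + d := by
  rw [lamMax, lamMax, ← Algebra.algebraMap_eq_smul_one, spectrum_smul_add_algebraMap M hc.ne']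
  exact (Monotone.map_csSup_of_continuousAt (by fun_prop : Continuous _).continuousAt
    (fun _ _ h => by gcongr) hM finite_real_spectrum.bddAbove).symm

lemma lamMin_smul_add_smul_one {M : Mat n} (hM : (spectrum ℝ M).Nonempty) {c : ℝ} (hc : 0 < c)
    (d : ℝ) : lamMin (c • M + d • 1) = c * lamMin M + d := by
  rw [lamMin, lamMin, ← Algebra.algebraMap_eq_smul_one, spectrum_smul_add_algebraMap M hc.ne']
  exact (Monotone.map_csInf_of_continuousAt (by fun_prop : Continuous _).continuousAt
    (fun _ _ h => by gcongr) hM finite_real_spectrum.bddBelow).symm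

lemma lamMax_smul_one [NeZero n] (r : ℝ) : lamMax (r • 1 : Mat n) = r := by
  rw [lamMax, ← Algebra.algebraMap_eq_smul_one, spectrum.scalar_eq, csSup_singleton]

lemma lamMin_smul_one [NeZero n] (r : ℝ) : lamMin (r • 1 : Mat n) = r := by
  rw [lamMin, ← Algebra.algebraMap_eq_smul_one, spectrum.scalar_eq, csInf_singleton]

lemma lamMin_le_lamMax [NeZero n] {M : Mat n} (hM : M.IsHermitian) : lamMin M ≤ lamMax M :=
  csInf_le_csSup (ContinuousFunctionalCalculus.spectrum_nonempty M hM)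
    finite_real_spectrum.bddBelow finite_real_spectrum.bddAbove

lemma lamMin_nonneg [NeZero n] {M : Mat n} (hM : M.PosSemidef) : 0 ≤ lamMin M :=
  posSemidef_iff_isHermitian_and_spectrum_nonneg.1 hM |>.2 <|
    (ContinuousFunctionalCalculus.spectrum_nonempty M hM.1).csInf_mem finite_real_spectrum

lemma sqrtM_eq_cfc {X : Mat n} (hX : X.PosSemidef) : sqrtM X = cfc Real.sqrt X := by
  rw [sqrtM, dif_pos hX, hX.1.cfc_eq, IsHermitian.cfc, Unitary.conjStarAlgAut_apply]

lemma sqrtM_mul_self {X : Mat n} (hX : X.PosSemidef) : sqrtM X * sqrtM X = X := by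
  have hspec : ∀ r ∈ spectrum ℝ X, 0 ≤ r :=
    (posSemidef_iff_isHermitian_and_spectrum_nonneg.1 hX).2
  rw [sqrtM_eq_cfc hX]
  calc cfc Real.sqrt X * cfc Real.sqrt X = cfc (fun r => √r * √r) X :=
        (cfc_mul Real.sqrt Real.sqrt X).symm
    _ = cfc (fun r => r) X := cfc_congr fun r hr => Real.mul_self_sqrt (hspec r hr)
    _ = X := cfc_id' ℝ X (ha := hX.1.isSelfAdjoint)

lemma isUnit_sqrtM {X : Mat n} (hX : X.PosDef) : IsUnit (sqrtM X) := by
  rw [sqrtM_eq_cfc hX.posSemidef,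
    isUnit_cfc_iff _ X Real.continuous_sqrt.continuousOn hX.1.isSelfAdjoint]
  intro r hr
  obtain ⟨i, rfl⟩ := hX.1.spectrum_real_eq_range_eigenvalues ▸ hr
  exact (Real.sqrt_pos.2 (hX.eigenvalues_pos i)).ne'

lemma isHermitian_invSqrt {X : Mat n} (hX : X.PosSemidef) : (invSqrt X).IsHermitian := by
  have : (sqrtM X).IsHermitian := sqrtM_eq_cfc hX ▸ cfc_predicate _ X
  exact this.inv

lemma invSqrt_mul_mul_invSqrt_self {X : Mat n} (hX : X.PosDef) :
    invSqrt X * X * invSqrt X = 1 := by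
  have hdet : IsUnit (sqrtM X).det := (isUnit_iff_isUnit_det _).1 (isUnit_sqrtM hX)
  nth_rewrite 2 [← sqrtM_mul_self hX.posSemidef]
  rw [invSqrt, ← Matrix.mul_assoc, nonsing_inv_mul _ hdet, Matrix.one_mul,
    mul_nonsing_inv _ hdet]

lemma isHermitian_invSqrt_mul_mul_invSqrt {X Y : Mat n} (hX : X.PosSemidef)
    (hY : Y.IsHermitian) : (invSqrt X * Y * invSqrt X).IsHermitian := by
  simpa only [(isHermitian_invSqrt hX).eq] using isHermitian_mul_mul_conjTranspose (invSqrt X) hY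

lemma posSemidef_invSqrt_mul_mul_invSqrt {X Y : Mat n} (hX : X.PosSemidef)
    (hY : Y.PosSemidef) : (invSqrt X * Y * invSqrt X).PosSemidef := by
  simpa only [(isHermitian_invSqrt hX).eq] using hY.mul_mul_conjTranspose_same (invSqrt X)

lemma invSqrt_mul_smul_add_smul_mul_invSqrt {X : Mat n} (hX : X.PosDef) (Y : Mat n) (a b : ℝ) :
    invSqrt X * (a • Y + b • X) * invSqrt X = a • (invSqrt X * Y * invSqrt X) + b • 1 := by
  rw [Matrix.mul_add, Matrix.add_mul, mul_smul_comm, mul_smul_comm, smul_mul_assoc,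
    smul_mul_assoc, invSqrt_mul_mul_invSqrt_self hX]

lemma thompson_zero (X Y : Mat n) : thompson X Y 0 = X := by
  unfold thompson
  split_ifs with h
  · simp
  · simp [div_self (sub_ne_zero.2 (Ne.symm h))]

lemma thompson_of_eq {X Y : Mat n} (h : gmin X Y = gmax X Y) (t : ℝ) :
    thompson X Y t = gmin X Y ^ t • X :=
  if_pos h

lemma thompson_of_ne {X Y : Mat n} (h : gmin X Y ≠ gmax X Y) (t : ℝ) :
    thompson X Y t = chordSlope (gmin X Y) (gmax X Y) (gmin X Y ^ t) (gmax X Y ^ t) • Y +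
      chordIntercept (gmin X Y) (gmax X Y) (gmin X Y ^ t) (gmax X Y ^ t) • X :=
  if_neg h

variable [NeZero n] {X Y : Mat n}

lemma gmin_nonneg (hX : X.PosSemidef) (hY : Y.PosSemidef) : 0 ≤ gmin X Y :=
  lamMin_nonneg (posSemidef_invSqrt_mul_mul_invSqrt hX hY)

lemma gmin_le_gmax (hX : X.PosSemidef) (hY : Y.IsHermitian) : gmin X Y ≤ gmax X Y :=
  lamMin_le_lamMax (isHermitian_invSqrt_mul_mul_invSqrt hX hY)

lemma gmin_smul_add_smul (hX : X.PosDef) (hY : Y.IsHermitian) {a : ℝ} (ha : 0 < a) (b : ℝ) :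
    gmin X (a • Y + b • X) = a * gmin X Y + b := by
  rw [gmin, invSqrt_mul_smul_add_smul_mul_invSqrt hX, lamMin_smul_add_smul_one _ ha, gmin]
  exact ContinuousFunctionalCalculus.spectrum_nonempty _
    (isHermitian_invSqrt_mul_mul_invSqrt hX.posSemidef hY)

lemma gmax_smul_add_smul (hX : X.PosDef) (hY : Y.IsHermitian) {a : ℝ} (ha : 0 < a) (b : ℝ) :
    gmax X (a • Y + b • X) = a * gmax X Y + b := by
  rw [gmax, invSqrt_mul_smul_add_smul_mul_invSqrt hX, lamMax_smul_add_smul_one _ ha, gmax]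
  exact ContinuousFunctionalCalculus.spectrum_nonempty _
    (isHermitian_invSqrt_mul_mul_invSqrt hX.posSemidef hY)

lemma gmin_smul_self (hX : X.PosDef) (c : ℝ) : gmin X (c • X) = c := by
  rw [gmin, mul_smul_comm, smul_mul_assoc, invSqrt_mul_mul_invSqrt_self hX, lamMin_smul_one]

lemma gmax_smul_self (hX : X.PosDef) (c : ℝ) : gmax X (c • X) = c := by
  rw [gmax, mul_smul_comm, smul_mul_assoc, invSqrt_mul_mul_invSqrt_self hX, lamMax_smul_one]

lemma thompson_smul_self (hX : X.PosDef) (c s : ℝ) : thompson X (c • X) s = c ^ s • X := by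
  rw [thompson_of_eq (by rw [gmin_smul_self hX, gmax_smul_self hX]), gmin_smul_self hX]

lemma thompson_self (hX : X.PosDef) (s : ℝ) : thompson X X s = X := by
  simpa using thompson_smul_self hX 1 s

lemma thompson_thompson_of_lt (hX : X.PosDef) (hY : Y.PosSemidef) (hlt : gmin X Y < gmax X Y)
    {t : ℝ} (ht : 0 < t) (s : ℝ) : thompson X (thompson X Y t) s = thompson X Y (s * t) := by
  set α := gmin X Y
  set β := gmax X Y
  have hα : 0 ≤ α := gmin_nonneg hX.posSemidef hY
  have hαβt : α ^ t < β ^ t := Real.rpow_lt_rpow hα hlt ht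
  have hslope : 0 < chordSlope α β (α ^ t) (β ^ t) := div_pos (sub_pos.2 hαβt) (sub_pos.2 hlt)
  have hmin : gmin X (thompson X Y t) = α ^ t := by
    rw [thompson_of_ne hlt.ne, gmin_smul_add_smul hX hY.1 hslope,
      chordSlope_mul_add_chordIntercept_left hlt.ne]
  have hmax : gmax X (thompson X Y t) = β ^ t := by
    rw [thompson_of_ne hlt.ne, gmax_smul_add_smul hX hY.1 hslope,
      chordSlope_mul_add_chordIntercept_right hlt.ne]
  rw [thompson_of_ne (hmin ▸ hmax ▸ hαβt.ne), hmin, hmax, thompson_of_ne hlt.ne,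
    thompson_of_ne hlt.ne, smul_add, smul_smul, smul_smul, add_assoc, ← add_smul,
    chordSlope_mul_chordSlope hαβt.ne,
    chordSlope_mul_chordIntercept_add_chordIntercept hlt.ne hαβt.ne,
    ← Real.rpow_mul hα, ← Real.rpow_mul (hα.trans hlt.le), mul_comm t s]

end Thompson

open Thompson

theorem thompson_consistency_left_general {n : ℕ} (X Y : Mat n) (hX : X.PosDef) (hY : Y.PosDef)
    (s t : ℝ) (ht : t ∈ Set.Icc (0 : ℝ) 1) :
    thompson X (thompson X Y t) s = thompson X Y (s * t) := by
  rcases n.eq_zero_or_pos with rfl | hn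
  · exact Subsingleton.elim _ _
  have : NeZero n := ⟨hn.ne'⟩
  rcases (gmin_le_gmax hX.posSemidef hY.1).eq_or_lt with hEq | hlt
  · rw [thompson_of_eq hEq, thompson_smul_self hX, thompson_of_eq hEq,
      ← Real.rpow_mul (gmin_nonneg hX.posSemidef hY.posSemidef), mul_comm]
  rcases ht.1.eq_or_lt with rfl | htpos
  · rw [mul_zero, thompson_zero, thompson_self hX]
  · exact thompson_thompson_of_lt hX hY.posSemidef hlt htpos s

/-- geodesic consistency `X *_s (X *_t Y) = X *_{st} Y`. -/
theorem thompson_consistency_left {n : ℕ} (X Y : Mat n) (hX : X.PosDef) (hY : Y.PosDef)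
    (s t : ℝ) (hs : s ∈ Set.Icc (0 : ℝ) 1) (ht : t ∈ Set.Icc (0 : ℝ) 1) :
    thompson X (thompson X Y t) s = thompson X Y (s * t) :=
  thompson_consistency_left_general X Y hX hY s t ht
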